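/- arXiv:1406.2158 — 3 statements merged into one kernel-verified Lean document; each statement's English description precedes it below -/
import Mathlib

section
/- Let X be a real Hilbert space, a : X × X → ℝ a bounded bilinear form, and T : X → X a bounded linear isomorphism such that a(x, T x) ≥ C ‖x‖² for all x ∈ X with some C > 0 (T-coercivity). Then the bounded linear operator A : X → X defined by ⟨A x, y⟩ = a(x, y) is invertible. -/
/-!
The form `b x y := a x (T y)` is coercive, so Lax–Milgram gives an isomorphism `L` with
`⟪L x, y⟫ = b x y`. Substituting `y ↦ T⁻¹ y` shows `A = (T⁻¹)† ∘ L`, a product of two units.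
-/

open scoped RealInnerProductSpace

theorem ContinuousLinearMap.isCoercive_bilinearComp_id_of_le
    {E : Type*} [SeminormedAddCommGroup E] [NormedSpace ℝ E]
    (a : E →L[ℝ] E →L[ℝ] ℝ) (T : E →L[ℝ] E) {C : ℝ} (hC : 0 < C)
    (hcoer : ∀ x, C * ‖x‖ ^ 2 ≤ a x (T x)) :
    IsCoercive (a.bilinearComp (.id ℝ E) T) :=
  ⟨C, hC, fun x => by simpa [mul_assoc, sq] using hcoer x⟩

theorem IsCoercive.eq_adjoint_symm_comp_continuousLinearEquivOfBilin
    {X : Type*} [NormedAddCommGroup X] [InnerProductSpace ℝ X] [CompleteSpace X]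
    {a : X →L[ℝ] X →L[ℝ] ℝ} {T : X ≃L[ℝ] X}
    (hb : IsCoercive (a.bilinearComp (.id ℝ X) (T : X →L[ℝ] X)))
    {A : X →L[ℝ] X} (hA : ∀ x y : X, ⟪A x, y⟫ = a x y) :
    A = ContinuousLinearMap.adjoint (T.symm : X →L[ℝ] X) ∘L hb.continuousLinearEquivOfBilin := by
  ext x
  refine ext_inner_right ℝ fun y => ?_
  calc ⟪A x, y⟫ = a x (T (T.symm y)) := by rw [hA, T.apply_symm_apply]
    _ = ⟪hb.continuousLinearEquivOfBilin x, T.symm y⟫ :=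
        (hb.continuousLinearEquivOfBilin_apply x _).symm
    _ = _ := by rw [ContinuousLinearMap.comp_apply, ContinuousLinearMap.adjoint_inner_left]; rfl

theorem stmt_9 {X : Type*} [NormedAddCommGroup X] [InnerProductSpace ℝ X] [CompleteSpace X]
    (a : X →L[ℝ] X →L[ℝ] ℝ) (T : X ≃L[ℝ] X) (C : ℝ) (hC : 0 < C)
    (hcoer : ∀ x : X, C * ‖x‖ ^ 2 ≤ a x (T x))
    (A : X →L[ℝ] X) (hA : ∀ x y : X, ⟪A x, y⟫ = a x y) :
    Function.Bijective A := by
  have hb := a.isCoercive_bilinearComp_id_of_le (T : X →L[ℝ] X) hC hcoer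
  rw [← ContinuousLinearMap.isUnit_iff_bijective,
    hb.eq_adjoint_symm_comp_continuousLinearEquivOfBilin hA, ← ContinuousLinearMap.star_eq_adjoint]
  exact T.symm.toUnit.isUnit.star.mul hb.continuousLinearEquivOfBilin.toUnit.isUnit
end

section
/- Let V be a real Hilbert space, a : V × V → ℝ a bounded bilinear form, and suppose there exist a bounded linear projection-type map π : V → V with finite-dimensional range and a constant C > 0 such that a(v, v) + ‖π v‖² ≥ C ‖v‖² for all v ∈ V. Then the operator A : V → V induced by a is Fredholm of index zero; in particular, if A is injective then A is invertible. -/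
/-!
The operator `B = A + p* p` satisfies `⟪B v, v⟫ = a v v + ‖p v‖² ≥ C ‖v‖²`, so it is an
isomorphism by Lax–Milgram, and `B - A` has range in the finite-dimensional space `W = p* (range p)`.
Then `range A` is closed, being a finite-rank perturbation of the closed range of `B`. Moreover
`ker A ⊆ B⁻¹ W`, `A (B⁻¹ W) = W ⊓ range A` and `W` maps onto `V ⧸ range A` with kernel
`W ⊓ range A`, so rank–nullity twice gives
`dim ker A = dim W - dim (W ⊓ range A) = dim (V ⧸ range A)`.
-/

namespace LinearMap

variable {K V V' : Type*} [Field K] [AddCommGroup V] [Module K V] [AddCommGroup V'] [Module K V']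
  {A : V →ₗ[K] V'} {e : V ≃ₗ[K] V'} {W : Submodule K V'}

theorem ker_le_map_symm_of_forall_sub_mem (hW : ∀ x, e x - A x ∈ W) :
    ker A ≤ W.map (e.symm : V' →ₗ[K] V) := by
  intro x hx
  simpa [Submodule.mem_map_equiv, mem_ker.mp hx] using hW x

theorem range_sup_eq_top_of_forall_sub_mem (hW : ∀ x, e x - A x ∈ W) : range A ⊔ W = ⊤ := by
  refine Submodule.eq_top_iff'.mpr fun y => ?_
  obtain ⟨x, rfl⟩ := e.surjective y
  simpa using Submodule.add_mem_sup (mem_range_self A x) (hW x)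

theorem map_map_symm_eq_inf_range_of_forall_sub_mem (hW : ∀ x, e x - A x ∈ W) :
    (W.map (e.symm : V' →ₗ[K] V)).map A = W ⊓ range A := by
  ext y
  constructor
  · rintro ⟨_, ⟨y, hy, rfl⟩, rfl⟩
    exact ⟨by simpa using sub_mem hy (hW (e.symm y)), mem_range_self A _⟩
  · rintro ⟨hy, x, rfl⟩
    exact ⟨x, ⟨e x, by simpa using add_mem hy (hW x), e.symm_apply_apply x⟩, rfl⟩

theorem surjective_mkQ_comp_subtype_of_forall_sub_mem (hW : ∀ x, e x - A x ∈ W) :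
    Function.Surjective ((range A).mkQ ∘ₗ W.subtype) := by
  rw [← range_eq_top, range_comp, Submodule.range_subtype, Submodule.map_mkQ_eq_top]
  exact range_sup_eq_top_of_forall_sub_mem hW

variable [FiniteDimensional K W]

theorem finiteDimensional_ker_of_forall_sub_mem (hW : ∀ x, e x - A x ∈ W) :
    FiniteDimensional K (ker A) :=
  Submodule.finiteDimensional_of_le (ker_le_map_symm_of_forall_sub_mem hW)

theorem finiteDimensional_quotient_range_of_forall_sub_mem (hW : ∀ x, e x - A x ∈ W) :
    FiniteDimensional K (V' ⧸ range A) :=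
  Module.Finite.of_surjective _ (surjective_mkQ_comp_subtype_of_forall_sub_mem hW)

theorem finrank_ker_eq_finrank_quotient_range_of_forall_sub_mem (hW : ∀ x, e x - A x ∈ W) :
    Module.finrank K (ker A) = Module.finrank K (V' ⧸ range A) := by
  set W₀ := W.map (e.symm : V' →ₗ[K] V)
  have hrestrict := finrank_range_add_finrank_ker (A.domRestrict W₀)
  rw [range_domRestrict, map_map_symm_eq_inf_range_of_forall_sub_mem hW, ker_domRestrict,
    (Submodule.comapSubtypeEquivOfLe (ker_le_map_symm_of_forall_sub_mem hW)).finrank_eq,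
    LinearEquiv.finrank_map_eq] at hrestrict
  have hquot := finrank_range_add_finrank_ker ((range A).mkQ ∘ₗ W.subtype)
  rw [range_eq_top.mpr (surjective_mkQ_comp_subtype_of_forall_sub_mem hW), finrank_top, ker_comp,
    Submodule.ker_mkQ, (Submodule.equivSubtypeMap W _).finrank_eq, Submodule.map_comap_subtype]
    at hquot
  omega

theorem surjective_of_injective_of_forall_sub_mem (hW : ∀ x, e x - A x ∈ W)
    (hA : Function.Injective A) : Function.Surjective A := by
  have := finiteDimensional_quotient_range_of_forall_sub_mem hW
  have hcoker := finrank_ker_eq_finrank_quotient_range_of_forall_sub_mem hW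
  rw [ker_eq_bot.mpr hA, finrank_bot, eq_comm, Module.finrank_zero_iff,
    Submodule.Quotient.subsingleton_iff] at hcoker
  exact range_eq_top.mp hcoker

end LinearMap

open scoped LinearMap.FiniteRangeSetoid in
theorem ContinuousLinearMap.isClosed_range_of_forall_sub_mem {𝕜 E F : Type*}
    [NontriviallyNormedField 𝕜] [CompleteSpace 𝕜]
    [AddCommGroup E] [Module 𝕜 E] [TopologicalSpace E] [IsTopologicalAddGroup E]
    [ContinuousSMul 𝕜 E]
    [AddCommGroup F] [Module 𝕜 F] [TopologicalSpace F] [IsTopologicalAddGroup F]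
    [ContinuousSMul 𝕜 F] [T2Space F]
    {A : E →L[𝕜] F} {e : E ≃L[𝕜] F} {W : Submodule 𝕜 F} [FiniteDimensional 𝕜 W]
    (hW : ∀ x, e x - A x ∈ W) : IsClosed (Set.range A) := by
  have hrange : LinearMap.range ((A : E →ₗ[𝕜] F) - ((e : E →L[𝕜] F) : E →ₗ[𝕜] F)) ≤ W := by
    rintro _ ⟨x, rfl⟩
    simpa using neg_mem (hW x)
  have := Submodule.finiteDimensional_of_le hrange
  have hequiv : (A : E →ₗ[𝕜] F) ≈ ((e : E →L[𝕜] F) : E →ₗ[𝕜] F) :=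
    LinearMap.FiniteRangeSetoid.equiv_iff_hasNoetherianRange.mpr
      (inferInstanceAs (IsNoetherian 𝕜 _))
  have he : IsClosed ((e : E →L[𝕜] F).range : Set F) := by
    simp [LinearMap.range_eq_top.mpr e.surjective]
  simpa [LinearMap.coe_range] using
    ((isStrictMap_isClosed_range_iff_of_finiteRangeSetoid A e hequiv).mpr
      ⟨e.toHomeomorph.isHomeomorph.isStrictMap, he⟩).2

open scoped RealInnerProductSpace

theorem ContinuousLinearMap.exists_continuousLinearEquiv_of_isCoercive {V : Type*}
    [NormedAddCommGroup V] [InnerProductSpace ℝ V] [CompleteSpace V] {B : V →L[ℝ] V}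
    (hB : IsCoercive (innerSL ℝ ∘L B)) : ∃ e : V ≃L[ℝ] V, ∀ x, e x = B x :=
  ⟨hB.continuousLinearEquivOfBilin,
    fun x => ext_inner_right ℝ (hB.continuousLinearEquivOfBilin_apply x)⟩

theorem stmt_10 {X : Type*} [NormedAddCommGroup X] [InnerProductSpace ℝ X] [CompleteSpace X]
    (a : X →L[ℝ] X →L[ℝ] ℝ) (p : X →L[ℝ] X)
    (hfin : FiniteDimensional ℝ (LinearMap.range (p : X →ₗ[ℝ] X))) (C : ℝ) (hC : 0 < C)
    (hGarding : ∀ v : X, C * ‖v‖ ^ 2 ≤ a v v + ‖p v‖ ^ 2)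
    (A : X →L[ℝ] X) (hA : ∀ u v : X, ⟪A u, v⟫ = a u v) :
    (FiniteDimensional ℝ (LinearMap.ker (A : X →ₗ[ℝ] X)) ∧
      IsClosed (Set.range A) ∧
      FiniteDimensional ℝ (X ⧸ LinearMap.range (A : X →ₗ[ℝ] X)) ∧
      Module.finrank ℝ (LinearMap.ker (A : X →ₗ[ℝ] X)) = Module.finrank ℝ (X ⧸ LinearMap.range (A : X →ₗ[ℝ] X))) ∧
    (Function.Injective A → Function.Bijective A) := by
  set p' := ContinuousLinearMap.adjoint p
  have hcoercive : IsCoercive (innerSL ℝ ∘L (A + p' ∘L p)) := by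
    refine ⟨C, hC, fun v => ?_⟩
    show C * ‖v‖ * ‖v‖ ≤ ⟪A v + p' (p v), v⟫
    rw [inner_add_left, hA, ContinuousLinearMap.adjoint_inner_left, real_inner_self_eq_norm_sq]
    linarith [hGarding v]
  obtain ⟨e, he⟩ := ContinuousLinearMap.exists_continuousLinearEquiv_of_isCoercive hcoercive
  set W := (LinearMap.range (p : X →ₗ[ℝ] X)).map (p' : X →ₗ[ℝ] X)
  have hW : ∀ x, e x - A x ∈ W := fun x =>
    ⟨p x, LinearMap.mem_range_self _ x, by simp [he]⟩
  have hWₗ : ∀ x, e.toLinearEquiv x - (A : X →ₗ[ℝ] X) x ∈ W := hW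
  exact ⟨⟨LinearMap.finiteDimensional_ker_of_forall_sub_mem hWₗ,
    ContinuousLinearMap.isClosed_range_of_forall_sub_mem hW,
    LinearMap.finiteDimensional_quotient_range_of_forall_sub_mem hWₗ,
    LinearMap.finrank_ker_eq_finrank_quotient_range_of_forall_sub_mem hWₗ⟩,
    fun hinj => ⟨hinj, LinearMap.surjective_of_injective_of_forall_sub_mem hWₗ hinj⟩⟩
end

section
/- Let X, Y be real Hilbert spaces, a : X × X → ℝ and b : X × Y → ℝ bounded bilinear forms, V := { x ∈ X : b(x, y) = 0 ∀ y ∈ Y } the kernel of b. Assume a is V-elliptic (a(v,v) ≥ α‖v‖² for all v ∈ V, α > 0) and b satisfies the inf-sup condition with constant β > 0. Then for every pair of bounded linear functionals F ∈ X', G ∈ Y' the saddle point problem a(σ, τ) + b(τ, u) = F(τ) ∀τ ∈ X, b(σ, v) = G(v) ∀v ∈ Y has a unique solution (σ, u) ∈ X × Y, and ‖σ‖ + ‖u‖ ≤ C(‖F‖ + ‖G‖) with C depending only on α, β and the norms of a and b. -/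
/-!
Let `B : Y → X` be the Riesz representative of `b`, `⟪B y, x⟫ = b x y`. The inf-sup condition
says `β ‖y‖ ≤ ‖B y‖`, so `B` has closed range `K`, the kernel of `b` is `V = Kᗮ`, and
`X = K ⊕ V`. Writing `σ = B y + w` with `w ∈ V`, the constraint determines `y` (Lax–Milgram for
the coercive form `⟪B ·, B ·⟫` on `Y`), the first equation tested on `V` determines `w`
(Lax–Milgram for `a` on `V`), and then the Riesz representative of `F - a σ` lies in
`Vᗮ = K`, which yields `u`. The same decomposition of an arbitrary solution gives the a priori
bound, and uniqueness follows from the bound by linearity.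
-/

open RealInnerProductSpace InnerProductSpace ContinuousLinearMap

lemma mul_le_of_mul_sq_le_mul {c t r : ℝ} (ht : 0 ≤ t) (hr : 0 ≤ r) (h : c * t ^ 2 ≤ r * t) :
    c * t ≤ r := by
  rcases ht.eq_or_lt with rfl | ht
  · simpa using hr
  · exact le_of_mul_le_mul_right (by nlinarith) ht

theorem IsCoercive.exists_forall_eq {V : Type*} [NormedAddCommGroup V] [InnerProductSpace ℝ V]
    [CompleteSpace V] {B : V →L[ℝ] V →L[ℝ] ℝ} (hB : IsCoercive B) (ℓ : V →L[ℝ] ℝ) :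
    ∃ v, ∀ w, B v w = ℓ w :=
  ⟨hB.continuousLinearEquivOfBilin.symm ((toDual ℝ V).symm ℓ), fun w => by
    rw [← hB.continuousLinearEquivOfBilin_apply, ContinuousLinearEquiv.apply_symm_apply,
      toDual_symm_apply]⟩

section SaddlePoint

variable {X Y : Type*} [NormedAddCommGroup X] [InnerProductSpace ℝ X]
  [NormedAddCommGroup Y] [InnerProductSpace ℝ Y]

def IsSaddleSolution (a : X →L[ℝ] X →L[ℝ] ℝ) (b : X →L[ℝ] Y →L[ℝ] ℝ) (F : X →L[ℝ] ℝ)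
    (G : Y →L[ℝ] ℝ) (σ : X) (u : Y) : Prop :=
  (∀ τ, a σ τ + b τ u = F τ) ∧ ∀ v, b σ v = G v

lemma IsSaddleSolution.sub {a : X →L[ℝ] X →L[ℝ] ℝ} {b : X →L[ℝ] Y →L[ℝ] ℝ}
    {F F' : X →L[ℝ] ℝ} {G G' : Y →L[ℝ] ℝ} {σ σ' : X} {u u' : Y}
    (h : IsSaddleSolution a b F G σ u) (h' : IsSaddleSolution a b F' G' σ' u') :
    IsSaddleSolution a b (F - F') (G - G') (σ - σ') (u - u') := by
  refine ⟨fun τ => ?_, fun v => ?_⟩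
  · simp only [map_sub, sub_apply, ← h.1 τ, ← h'.1 τ]
    ring
  · simp [h.2 v, h'.2 v]

lemma norm_sub_apply_le (F : X →L[ℝ] ℝ) (a : X →L[ℝ] X →L[ℝ] ℝ) (σ : X) :
    ‖F - a σ‖ ≤ ‖F‖ + ‖a‖ * ‖σ‖ :=
  (norm_sub_le _ _).trans (by gcongr; exact a.le_opNorm σ)

variable [CompleteSpace X]

noncomputable def rieszFlip (b : X →L[ℝ] Y →L[ℝ] ℝ) : Y →L[ℝ] X :=
  (toDual ℝ X).symm.toContinuousLinearEquiv.toContinuousLinearMap.comp b.flip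

@[simp]
lemma inner_rieszFlip_left (b : X →L[ℝ] Y →L[ℝ] ℝ) (y : Y) (x : X) :
    ⟪rieszFlip b y, x⟫ = b x y := by
  simp [rieszFlip, toDual_symm_apply]

lemma rieszFlip_eq_toDual_symm_iff {b : X →L[ℝ] Y →L[ℝ] ℝ} {u : Y} {L : X →L[ℝ] ℝ} :
    rieszFlip b u = (toDual ℝ X).symm L ↔ ∀ τ, b τ u = L τ := by
  rw [← (toDual ℝ X).injective.eq_iff, LinearIsometryEquiv.apply_symm_apply,
    ContinuousLinearMap.ext_iff]
  simp [toDual_apply_apply]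

lemma mem_orthogonal_range_rieszFlip {b : X →L[ℝ] Y →L[ℝ] ℝ} {x : X} :
    x ∈ ((rieszFlip b).range)ᗮ ↔ ∀ y, b x y = 0 := by
  simp [Submodule.mem_orthogonal]

lemma mul_norm_le_norm_rieszFlip {b : X →L[ℝ] Y →L[ℝ] ℝ} {β : ℝ} {y : Y}
    (h : β * ‖y‖ ≤ ⨆ x : {x : X // x ≠ 0}, b x.1 y / ‖x.1‖) : β * ‖y‖ ≤ ‖rieszFlip b y‖ := by
  refine h.trans (Real.iSup_le (fun x => ?_) (norm_nonneg _))
  rw [div_le_iff₀ (norm_pos_iff.mpr x.2), ← inner_rieszFlip_left]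
  exact real_inner_le_norm _ _

variable {b : X →L[ℝ] Y →L[ℝ] ℝ} {β : ℝ}

lemma isClosed_range_rieszFlip [CompleteSpace Y] (hβ : 0 < β)
    (hB : ∀ y, β * ‖y‖ ≤ ‖rieszFlip b y‖) : IsClosed ((rieszFlip b).range : Set X) := by
  refine ((rieszFlip b).antilipschitz_of_bound (K := β⁻¹.toNNReal) fun y => ?_).isClosed_range
    (rieszFlip b).uniformContinuous
  rw [Real.coe_toNNReal _ (inv_nonneg.mpr hβ.le), ← div_eq_inv_mul, le_div_iff₀ hβ, mul_comm]
  exact hB y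

lemma hasOrthogonalProjection_range_rieszFlip [CompleteSpace Y] (hβ : 0 < β)
    (hB : ∀ y, β * ‖y‖ ≤ ‖rieszFlip b y‖) : (rieszFlip b).range.HasOrthogonalProjection :=
  have := (isClosed_range_rieszFlip hβ hB).completeSpace_coe
  inferInstance

lemma isCoercive_comp_rieszFlip (hβ : 0 < β) (hB : ∀ y, β * ‖y‖ ≤ ‖rieszFlip b y‖) :
    IsCoercive (b.comp (rieszFlip b)) := by
  refine ⟨β * β, by positivity, fun y => ?_⟩
  rw [comp_apply, ← inner_rieszFlip_left, real_inner_self_eq_norm_mul_norm]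
  calc β * β * ‖y‖ * ‖y‖ = (β * ‖y‖) * (β * ‖y‖) := by ring
    _ ≤ ‖rieszFlip b y‖ * ‖rieszFlip b y‖ := mul_self_le_mul_self (by positivity) (hB y)

lemma mul_norm_rieszFlip_le {G : Y →L[ℝ] ℝ} {y : Y} (hβ : 0 < β)
    (hB : ∀ y, β * ‖y‖ ≤ ‖rieszFlip b y‖) (hy : ∀ v, b (rieszFlip b y) v = G v) :
    β * ‖rieszFlip b y‖ ≤ ‖G‖ := by
  refine mul_le_of_mul_sq_le_mul (norm_nonneg _) (norm_nonneg _) ?_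
  calc β * ‖rieszFlip b y‖ ^ 2 = β * G y := by
        rw [← hy, ← inner_rieszFlip_left, real_inner_self_eq_norm_sq]
    _ ≤ β * (‖G‖ * ‖y‖) := by gcongr; exact (Real.le_norm_self _).trans (G.le_opNorm y)
    _ = ‖G‖ * (β * ‖y‖) := by ring
    _ ≤ ‖G‖ * ‖rieszFlip b y‖ := by gcongr; exact hB y

lemma isCoercive_restrict_orthogonal_range_rieszFlip {a : X →L[ℝ] X →L[ℝ] ℝ} {α : ℝ}
    (hα : 0 < α) (hell : ∀ v : X, (∀ y : Y, b v y = 0) → α * ‖v‖ ^ 2 ≤ a v v) :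
    IsCoercive (a.bilinearComp (rieszFlip b).rangeᗮ.subtypeL (rieszFlip b).rangeᗮ.subtypeL) := by
  refine ⟨α, hα, fun v => ?_⟩
  rw [bilinearComp_apply, mul_assoc, ← sq]
  exact hell v (mem_orthogonal_range_rieszFlip.mp v.2)

variable {a : X →L[ℝ] X →L[ℝ] ℝ} {α : ℝ}

theorem exists_isSaddleSolution [CompleteSpace Y] (hα : 0 < α) (hβ : 0 < β)
    (hB : ∀ y, β * ‖y‖ ≤ ‖rieszFlip b y‖)
    (hell : ∀ v : X, (∀ y : Y, b v y = 0) → α * ‖v‖ ^ 2 ≤ a v v)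
    (F : X →L[ℝ] ℝ) (G : Y →L[ℝ] ℝ) : ∃ σ u, IsSaddleSolution a b F G σ u := by
  have := hasOrthogonalProjection_range_rieszFlip hβ hB
  obtain ⟨y, hy⟩ : ∃ y, ∀ v, b (rieszFlip b y) v = G v :=
    (isCoercive_comp_rieszFlip hβ hB).exists_forall_eq G
  obtain ⟨⟨w, hwV⟩, hw⟩ :=
    (isCoercive_restrict_orthogonal_range_rieszFlip hα hell).exists_forall_eq
      ((F - a (rieszFlip b y)).comp (rieszFlip b).rangeᗮ.subtypeL)
  obtain ⟨u, hu⟩ : (toDual ℝ X).symm (F - a (rieszFlip b y + w)) ∈ (rieszFlip b).range := by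
    rw [← Submodule.orthogonal_orthogonal (rieszFlip b).range, Submodule.mem_orthogonal]
    intro v hv
    rw [real_inner_comm, toDual_symm_apply]
    have := hw ⟨v, hv⟩
    simp only [bilinearComp_apply, comp_apply, Submodule.subtypeL_apply, sub_apply] at this
    simp only [sub_apply, map_add, add_apply]
    linarith
  refine ⟨rieszFlip b y + w, u, fun τ => ?_, fun v => ?_⟩
  · have := rieszFlip_eq_toDual_symm_iff.mp hu τ
    simp only [sub_apply] at this
    linarith
  · simp [hy v, mem_orthogonal_range_rieszFlip.mp hwV v]

noncomputable def primalConst (α β M : ℝ) : ℝ := 1 / β + (1 + M / β) / α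

noncomputable def saddleConst (α β M : ℝ) : ℝ :=
  primalConst α β M + (1 + M * primalConst α β M) / β

lemma saddleConst_pos {M : ℝ} (hα : 0 < α) (hβ : 0 < β) (hM : 0 ≤ M) : 0 < saddleConst α β M := by
  unfold saddleConst primalConst
  positivity

variable {F : X →L[ℝ] ℝ} {G : Y →L[ℝ] ℝ} {σ : X} {u : Y}

theorem IsSaddleSolution.norm_fst_le [CompleteSpace Y] (hα : 0 < α) (hβ : 0 < β)
    (hB : ∀ y, β * ‖y‖ ≤ ‖rieszFlip b y‖)
    (hell : ∀ v : X, (∀ y : Y, b v y = 0) → α * ‖v‖ ^ 2 ≤ a v v)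
    (h : IsSaddleSolution a b F G σ u) : ‖σ‖ ≤ primalConst α β ‖a‖ * (‖F‖ + ‖G‖) := by
  have := hasOrthogonalProjection_range_rieszFlip hβ hB
  obtain ⟨_, ⟨y, rfl⟩, w, hw, rfl⟩ := (rieszFlip b).range.exists_add_mem_mem_orthogonal σ
  rw [mem_orthogonal_range_rieszFlip] at hw
  rw [coe_coe] at h
  set σ₀ := rieszFlip b y
  have hσ₀ : β * ‖σ₀‖ ≤ ‖G‖ := mul_norm_rieszFlip_le hβ hB fun v => by simpa [hw v] using h.2 v
  have hw' : α * ‖w‖ ≤ ‖F - a σ₀‖ := by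
    refine mul_le_of_mul_sq_le_mul (norm_nonneg _) (norm_nonneg _) ?_
    calc α * ‖w‖ ^ 2 ≤ a w w := hell w hw
      _ = (F - a σ₀) w := by
        have := h.1 w
        simp only [map_add, add_apply, hw u, sub_apply] at this ⊢
        linarith
      _ ≤ ‖F - a σ₀‖ * ‖w‖ := (Real.le_norm_self _).trans ((F - a σ₀).le_opNorm w)
  set S := ‖F‖ + ‖G‖
  have hσ₀S : ‖σ₀‖ ≤ S / β := by
    rw [le_div_iff₀ hβ]
    linarith [norm_nonneg F]
  have hwS : ‖w‖ ≤ (S + ‖a‖ * (S / β)) / α := by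
    rw [le_div_iff₀ hα]
    linarith [norm_sub_apply_le F a σ₀, mul_le_mul_of_nonneg_left hσ₀S (norm_nonneg a),
      norm_nonneg G]
  calc ‖σ₀ + w‖ ≤ ‖σ₀‖ + ‖w‖ := norm_add_le _ _
    _ ≤ S / β + (S + ‖a‖ * (S / β)) / α := add_le_add hσ₀S hwS
    _ = primalConst α β ‖a‖ * S := by unfold primalConst; ring

theorem IsSaddleSolution.mul_norm_snd_le (hB : ∀ y, β * ‖y‖ ≤ ‖rieszFlip b y‖)
    (h : IsSaddleSolution a b F G σ u) : β * ‖u‖ ≤ ‖F‖ + ‖a‖ * ‖σ‖ := by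
  have hu : rieszFlip b u = (toDual ℝ X).symm (F - a σ) :=
    rieszFlip_eq_toDual_symm_iff.mpr fun τ => by rw [sub_apply, ← h.1 τ]; ring
  calc β * ‖u‖ ≤ ‖rieszFlip b u‖ := hB u
    _ = ‖F - a σ‖ := by rw [hu, LinearIsometryEquiv.norm_map]
    _ ≤ ‖F‖ + ‖a‖ * ‖σ‖ := norm_sub_apply_le F a σ

theorem IsSaddleSolution.norm_add_norm_le [CompleteSpace Y] (hα : 0 < α) (hβ : 0 < β)
    (hB : ∀ y, β * ‖y‖ ≤ ‖rieszFlip b y‖)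
    (hell : ∀ v : X, (∀ y : Y, b v y = 0) → α * ‖v‖ ^ 2 ≤ a v v)
    (h : IsSaddleSolution a b F G σ u) :
    ‖σ‖ + ‖u‖ ≤ saddleConst α β ‖a‖ * (‖F‖ + ‖G‖) := by
  have hσ := h.norm_fst_le hα hβ hB hell
  set κ := primalConst α β ‖a‖
  set S := ‖F‖ + ‖G‖
  have hu : ‖u‖ ≤ (1 + ‖a‖ * κ) / β * S := by
    rw [div_mul_eq_mul_div, le_div_iff₀ hβ]
    linarith [h.mul_norm_snd_le hB, mul_le_mul_of_nonneg_left hσ (norm_nonneg a), norm_nonneg G]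
  calc ‖σ‖ + ‖u‖ ≤ κ * S + (1 + ‖a‖ * κ) / β * S := add_le_add hσ hu
    _ = saddleConst α β ‖a‖ * S := by unfold saddleConst; ring

theorem IsSaddleSolution.unique [CompleteSpace Y] {σ' : X} {u' : Y} (hα : 0 < α) (hβ : 0 < β)
    (hB : ∀ y, β * ‖y‖ ≤ ‖rieszFlip b y‖)
    (hell : ∀ v : X, (∀ y : Y, b v y = 0) → α * ‖v‖ ^ 2 ≤ a v v)
    (h : IsSaddleSolution a b F G σ u) (h' : IsSaddleSolution a b F G σ' u') :
    σ = σ' ∧ u = u' := by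
  have hle : ‖σ - σ'‖ + ‖u - u'‖ ≤ 0 := by
    simpa using (h.sub h').norm_add_norm_le hα hβ hB hell
  exact ⟨sub_eq_zero.mp (norm_le_zero_iff.mp (by linarith [norm_nonneg (u - u')])),
    sub_eq_zero.mp (norm_le_zero_iff.mp (by linarith [norm_nonneg (σ - σ')]))⟩

end SaddlePoint

theorem stmt_14 {X Y : Type*} [NormedAddCommGroup X] [InnerProductSpace ℝ X] [CompleteSpace X]
    [NormedAddCommGroup Y] [InnerProductSpace ℝ Y] [CompleteSpace Y]
    (a : X →L[ℝ] X →L[ℝ] ℝ) (b : X →L[ℝ] Y →L[ℝ] ℝ)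
    (α β : ℝ) (hα : 0 < α) (hβ : 0 < β)
    (hell : ∀ v : X, (∀ y : Y, b v y = 0) → α * ‖v‖ ^ 2 ≤ a v v)
    (hinfsup : ∀ y : Y, β * ‖y‖ ≤ ⨆ x : {x : X // x ≠ 0}, b x.1 y / ‖x.1‖) :
    ∃ C > 0, ∀ (F : X →L[ℝ] ℝ) (G : Y →L[ℝ] ℝ),
      (∃! p : X × Y, (∀ τ : X, a p.1 τ + b τ p.2 = F τ) ∧ (∀ v : Y, b p.1 v = G v)) ∧
      (∀ p : X × Y,
        ((∀ τ : X, a p.1 τ + b τ p.2 = F τ) ∧ (∀ v : Y, b p.1 v = G v)) →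
        ‖p.1‖ + ‖p.2‖ ≤ C * (‖F‖ + ‖G‖)) := by
  have hB y : β * ‖y‖ ≤ ‖rieszFlip b y‖ := mul_norm_le_norm_rieszFlip (hinfsup y)
  refine ⟨saddleConst α β ‖a‖, saddleConst_pos hα hβ (norm_nonneg a), fun F G => ⟨?_, fun p hp =>
    IsSaddleSolution.norm_add_norm_le hα hβ hB hell hp⟩⟩
  obtain ⟨σ, u, h⟩ := exists_isSaddleSolution hα hβ hB hell F G
  refine ⟨(σ, u), h, fun p hp => ?_⟩
  obtain ⟨hσ, hu⟩ := IsSaddleSolution.unique hα hβ hB hell hp h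
  exact Prod.ext hσ hu
end
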